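/- Fix real numbers α > 2 and τ > 0. For t > 0, r > 0 and R > 0 define M(t, r, R) = ∫_r^{r+R} t²·u^(1−2α)/(1 + t²·u^(−2α)) du + ∫_{r+R}^∞ t²·τ²·u^(1−2α)/(1 + t²·τ²·u^(−2α)) du and N(t, r, R) = ∫_{r+R}^∞ t·τ·u^(1−α)/(1 + t²·τ²·u^(−2α)) du − ∫_r^{r+R} t·u^(1−α)/(1 + t²·u^(−2α)) du. For λ > 0 and R > 0 define G(λ, R) = ∫₀^∞ ∫₀^∞ 2π·λ·r·e^(−π·λ·r²)·(1/t)·(1/(1 + t²·r^(−2α)))·e^(−2π·λ·M(t, r, R))·( t·r^(−α)·cos(2π·λ·N(t, r, R)) − sin(2π·λ·N(t, r, R)) ) dt dr (an iterated Lebesgue integral). Then for every c > 0, G(c·λ, R/√c) = G(λ, R). -/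

import Mathlib

open MeasureTheory Set Real

/-- `M(t, r, R)` from Theorem 1 of the paper (with SINR threshold `τ` and path-loss
exponent `α`). -/
noncomputable def Mq (α τ t r R : ℝ) : ℝ :=
  (∫ u in Ioo r (r + R), t ^ 2 * u ^ (1 - 2 * α) / (1 + t ^ 2 * u ^ (-(2 * α))))
    + ∫ u in Ioi (r + R),
        t ^ 2 * τ ^ 2 * u ^ (1 - 2 * α) / (1 + t ^ 2 * τ ^ 2 * u ^ (-(2 * α)))

/-- `N(t, r, R)` from Theorem 1 of the paper (with SINR threshold `τ` and path-loss
exponent `α`). -/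
noncomputable def Nq (α τ t r R : ℝ) : ℝ :=
  (∫ u in Ioi (r + R), t * τ * u ^ (1 - α) / (1 + t ^ 2 * τ ^ 2 * u ^ (-(2 * α))))
    - ∫ u in Ioo r (r + R), t * u ^ (1 - α) / (1 + t ^ 2 * u ^ (-(2 * α)))

/-- The interference-limited (σ² = 0) SINR coverage expression of Theorem 1, as an
iterated Lebesgue integral, as a function of the base-station density `lam` and the
connectivity-radius offset `R`. -/
noncomputable def Gq (α τ lam R : ℝ) : ℝ :=
  ∫ r in Ioi (0 : ℝ), ∫ t in Ioi (0 : ℝ),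
    2 * π * lam * r * Real.exp (-(π * lam * r ^ 2)) * (1 / t)
      * (1 / (1 + t ^ 2 * r ^ (-(2 * α))))
      * Real.exp (-(2 * π * lam * Mq α τ t r R))
      * (t * r ^ (-α) * Real.cos (2 * π * lam * Nq α τ t r R)
          - Real.sin (2 * π * lam * Nq α τ t r R))

lemma scale_Ioi (f : ℝ → ℝ) {s : ℝ} (hs : 0 < s) (a : ℝ) :
    ∫ u in Ioi (s * a), f u = s * ∫ x in Ioi a, f (s * x) := by
  rw [MeasureTheory.integral_comp_mul_left_Ioi f a hs, smul_eq_mul, ← mul_assoc,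
    mul_inv_cancel₀ hs.ne', one_mul]

lemma scale_Ioo (f : ℝ → ℝ) {s a b : ℝ} (hs : 0 < s) (hab : a ≤ b) :
    ∫ u in Ioo (s * a) (s * b), f u = s * ∫ x in Ioo a b, f (s * x) := by
  rw [← integral_Ioc_eq_integral_Ioo, ← integral_Ioc_eq_integral_Ioo,
    ← intervalIntegral.integral_of_le hab,
    ← intervalIntegral.integral_of_le (mul_le_mul_of_nonneg_left hab hs.le),
    intervalIntegral.integral_comp_mul_left f hs.ne', smul_eq_mul, ← mul_assoc,
    mul_inv_cancel₀ hs.ne', one_mul]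

section facts
variable {s : ℝ} (hs : 0 < s) (α : ℝ)

lemma ea (hs : 0 < s) (α : ℝ) : (s ^ α) ^ 2 = s ^ (2 * α) := by
  rw [sq, ← Real.rpow_add hs]; ring_nf

lemma ed (hs : 0 < s) (α : ℝ) : s ^ (2 * α) * s ^ (-(2 * α)) = 1 := by
  rw [← Real.rpow_add hs]; simp

lemma ee (hs : 0 < s) (α : ℝ) : s ^ (2 * α) * s ^ (1 - 2 * α) = s := by
  rw [← Real.rpow_add hs]; ring_nf; exact Real.rpow_one s

lemma eg (hs : 0 < s) (α : ℝ) : s ^ α * s ^ (1 - α) = s := by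
  rw [← Real.rpow_add hs]; ring_nf; exact Real.rpow_one s

end facts

lemma M_scale (α τ : ℝ) {s t r R : ℝ} (hs : 0 < s) (hr : 0 < r) (hR : 0 < R) :
    Mq α τ (s ^ α * t) (s * r) (s * R) = s ^ 2 * Mq α τ t r R := by
  have hrR : r ≤ r + R := by linarith
  have hend : s * r + s * R = s * (r + R) := by ring
  unfold Mq
  rw [hend, scale_Ioo _ hs hrR, scale_Ioi _ hs (r + R)]
  have h1 : ∀ x : ℝ, 0 < x →
      (s ^ α * t) ^ 2 * (s * x) ^ (1 - 2 * α) / (1 + (s ^ α * t) ^ 2 * (s * x) ^ (-(2 * α)))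
        = s * (t ^ 2 * x ^ (1 - 2 * α) / (1 + t ^ 2 * x ^ (-(2 * α)))) := by
    intro x hx
    have eb : (s * x) ^ (1 - 2 * α) = s ^ (1 - 2 * α) * x ^ (1 - 2 * α) :=
      Real.mul_rpow hs.le hx.le
    have ec : (s * x) ^ (-(2 * α)) = s ^ (-(2 * α)) * x ^ (-(2 * α)) :=
      Real.mul_rpow hs.le hx.le
    rw [mul_pow, ea hs α, eb, ec,
      show s ^ (2 * α) * t ^ 2 * (s ^ (-(2 * α)) * x ^ (-(2 * α)))
          = s ^ (2 * α) * s ^ (-(2 * α)) * (t ^ 2 * x ^ (-(2 * α))) from by ring,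
      ed hs α, one_mul,
      show s ^ (2 * α) * t ^ 2 * (s ^ (1 - 2 * α) * x ^ (1 - 2 * α))
          = s ^ (2 * α) * s ^ (1 - 2 * α) * (t ^ 2 * x ^ (1 - 2 * α)) from by ring,
      ee hs α, mul_div_assoc]
  have h2 : ∀ x : ℝ, 0 < x →
      (s ^ α * t) ^ 2 * τ ^ 2 * (s * x) ^ (1 - 2 * α)
          / (1 + (s ^ α * t) ^ 2 * τ ^ 2 * (s * x) ^ (-(2 * α)))
        = s * (t ^ 2 * τ ^ 2 * x ^ (1 - 2 * α) / (1 + t ^ 2 * τ ^ 2 * x ^ (-(2 * α)))) := by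
    intro x hx
    have eb : (s * x) ^ (1 - 2 * α) = s ^ (1 - 2 * α) * x ^ (1 - 2 * α) :=
      Real.mul_rpow hs.le hx.le
    have ec : (s * x) ^ (-(2 * α)) = s ^ (-(2 * α)) * x ^ (-(2 * α)) :=
      Real.mul_rpow hs.le hx.le
    rw [mul_pow, ea hs α, eb, ec,
      show s ^ (2 * α) * t ^ 2 * τ ^ 2 * (s ^ (-(2 * α)) * x ^ (-(2 * α)))
          = s ^ (2 * α) * s ^ (-(2 * α)) * (t ^ 2 * τ ^ 2 * x ^ (-(2 * α))) from by ring,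
      ed hs α, one_mul,
      show s ^ (2 * α) * t ^ 2 * τ ^ 2 * (s ^ (1 - 2 * α) * x ^ (1 - 2 * α))
          = s ^ (2 * α) * s ^ (1 - 2 * α) * (t ^ 2 * τ ^ 2 * x ^ (1 - 2 * α)) from by ring,
      ee hs α, mul_div_assoc]
  rw [setIntegral_congr_fun measurableSet_Ioo (fun x hx => h1 x (lt_trans hr hx.1)),
    setIntegral_congr_fun measurableSet_Ioi (fun x hx => h2 x (lt_trans (by linarith) hx)),
    integral_const_mul, integral_const_mul]
  ring

lemma N_scale (α τ : ℝ) {s t r R : ℝ} (hs : 0 < s) (hr : 0 < r) (hR : 0 < R) :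
    Nq α τ (s ^ α * t) (s * r) (s * R) = s ^ 2 * Nq α τ t r R := by
  have hrR : r ≤ r + R := by linarith
  have hend : s * r + s * R = s * (r + R) := by ring
  unfold Nq
  rw [hend, scale_Ioo _ hs hrR, scale_Ioi _ hs (r + R)]
  have h1 : ∀ x : ℝ, 0 < x →
      s ^ α * t * τ * (s * x) ^ (1 - α)
          / (1 + (s ^ α * t) ^ 2 * τ ^ 2 * (s * x) ^ (-(2 * α)))
        = s * (t * τ * x ^ (1 - α) / (1 + t ^ 2 * τ ^ 2 * x ^ (-(2 * α)))) := by
    intro x hx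
    have eb : (s * x) ^ (1 - α) = s ^ (1 - α) * x ^ (1 - α) :=
      Real.mul_rpow hs.le hx.le
    have ec : (s * x) ^ (-(2 * α)) = s ^ (-(2 * α)) * x ^ (-(2 * α)) :=
      Real.mul_rpow hs.le hx.le
    rw [mul_pow, ea hs α, eb, ec,
      show s ^ (2 * α) * t ^ 2 * τ ^ 2 * (s ^ (-(2 * α)) * x ^ (-(2 * α)))
          = s ^ (2 * α) * s ^ (-(2 * α)) * (t ^ 2 * τ ^ 2 * x ^ (-(2 * α))) from by ring,
      ed hs α, one_mul,
      show s ^ α * t * τ * (s ^ (1 - α) * x ^ (1 - α))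
          = s ^ α * s ^ (1 - α) * (t * τ * x ^ (1 - α)) from by ring,
      eg hs α, mul_div_assoc]
  have h2 : ∀ x : ℝ, 0 < x →
      s ^ α * t * (s * x) ^ (1 - α) / (1 + (s ^ α * t) ^ 2 * (s * x) ^ (-(2 * α)))
        = s * (t * x ^ (1 - α) / (1 + t ^ 2 * x ^ (-(2 * α)))) := by
    intro x hx
    have eb : (s * x) ^ (1 - α) = s ^ (1 - α) * x ^ (1 - α) :=
      Real.mul_rpow hs.le hx.le
    have ec : (s * x) ^ (-(2 * α)) = s ^ (-(2 * α)) * x ^ (-(2 * α)) :=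
      Real.mul_rpow hs.le hx.le
    rw [mul_pow, ea hs α, eb, ec,
      show s ^ (2 * α) * t ^ 2 * (s ^ (-(2 * α)) * x ^ (-(2 * α)))
          = s ^ (2 * α) * s ^ (-(2 * α)) * (t ^ 2 * x ^ (-(2 * α))) from by ring,
      ed hs α, one_mul,
      show s ^ α * t * (s ^ (1 - α) * x ^ (1 - α))
          = s ^ α * s ^ (1 - α) * (t * x ^ (1 - α)) from by ring,
      eg hs α, mul_div_assoc]
  rw [setIntegral_congr_fun measurableSet_Ioi (fun x hx => h1 x (lt_trans (by linarith) hx)),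
    setIntegral_congr_fun measurableSet_Ioo (fun x hx => h2 x (lt_trans hr hx.1)),
    integral_const_mul, integral_const_mul]
  ring

/-- Remark 1 of the paper: in the interference-limited regime the coverage expression
depends on `(λ, R_s)` only through `√(λπ)·R_s`; scaling `λ ↦ c λ`, `R_s ↦ R_s/√c`
leaves it unchanged. -/
theorem coverage_scale_invariance
    (α τ : ℝ) (hα : 2 < α) (hτ : 0 < τ)
    (lam R c : ℝ) (hlam : 0 < lam) (hR : 0 < R) (hc : 0 < c) :
    Gq α τ (c * lam) (R / Real.sqrt c) = Gq α τ lam R := by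
  have hsc : 0 < Real.sqrt c := Real.sqrt_pos.2 hc
  set s : ℝ := (Real.sqrt c)⁻¹ with hsdef
  have hs : 0 < s := inv_pos.2 hsc
  have hcs : c * s ^ 2 = 1 := by
    rw [hsdef, inv_pow, mul_inv_eq_one₀ (by positivity), Real.sq_sqrt hc.le]
  have hsa : 0 < s ^ α := Real.rpow_pos_of_pos hs α
  have hRs : R / Real.sqrt c = s * R := by rw [div_eq_mul_inv, mul_comm, hsdef]
  rw [hRs]
  unfold Gq
  have point : ∀ r : ℝ, 0 < r → ∀ t : ℝ, 0 < t →
      2 * π * (c * lam) * (s * r) * Real.exp (-(π * (c * lam) * (s * r) ^ 2))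
          * (1 / (s ^ α * t))
          * (1 / (1 + (s ^ α * t) ^ 2 * (s * r) ^ (-(2 * α))))
          * Real.exp (-(2 * π * (c * lam) * Mq α τ (s ^ α * t) (s * r) (s * R)))
          * (s ^ α * t * (s * r) ^ (-α)
                * Real.cos (2 * π * (c * lam) * Nq α τ (s ^ α * t) (s * r) (s * R))
              - Real.sin (2 * π * (c * lam) * Nq α τ (s ^ α * t) (s * r) (s * R)))
        = (s ^ α)⁻¹ * (s⁻¹ *
            (2 * π * lam * r * Real.exp (-(π * lam * r ^ 2)) * (1 / t)
              * (1 / (1 + t ^ 2 * r ^ (-(2 * α))))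
              * Real.exp (-(2 * π * lam * Mq α τ t r R))
              * (t * r ^ (-α) * Real.cos (2 * π * lam * Nq α τ t r R)
                  - Real.sin (2 * π * lam * Nq α τ t r R)))) := by
    intro r hr t ht
    have hM := M_scale α τ (t := t) hs hr hR
    have hN := N_scale α τ (t := t) hs hr hR
    have h1 : (s ^ α * t) ^ 2 * (s * r) ^ (-(2 * α)) = t ^ 2 * r ^ (-(2 * α)) := by
      rw [mul_pow, ea hs α, Real.mul_rpow hs.le hr.le,
        show s ^ (2 * α) * t ^ 2 * (s ^ (-(2 * α)) * r ^ (-(2 * α)))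
            = s ^ (2 * α) * s ^ (-(2 * α)) * (t ^ 2 * r ^ (-(2 * α))) from by ring,
        ed hs α, one_mul]
    have h2 : s ^ α * t * (s * r) ^ (-α) = t * r ^ (-α) := by
      rw [Real.mul_rpow hs.le hr.le,
        show s ^ α * t * (s ^ (-α) * r ^ (-α))
            = s ^ α * s ^ (-α) * (t * r ^ (-α)) from by ring,
        ← Real.rpow_add hs]
      simp
    have hE : π * (c * lam) * (s * r) ^ 2 = π * lam * r ^ 2 := by
      rw [mul_pow]; linear_combination (π * lam * r ^ 2) * hcs
    have hB : 2 * π * (c * lam) * (s ^ 2 * Mq α τ t r R) = 2 * π * lam * Mq α τ t r R := by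
      linear_combination (2 * π * lam * Mq α τ t r R) * hcs
    have hC : 2 * π * (c * lam) * (s ^ 2 * Nq α τ t r R) = 2 * π * lam * Nq α τ t r R := by
      linear_combination (2 * π * lam * Nq α τ t r R) * hcs
    rw [hM, hN, h1, h2, hE, hB, hC]
    have key : 2 * π * (c * lam) * (s * r) * (1 / (s ^ α * t))
        = (s ^ α)⁻¹ * (s⁻¹ * (2 * π * lam * r * (1 / t))) := by
      field_simp
      linear_combination hcs
    linear_combination (Real.exp (-(π * lam * r ^ 2))
        * (1 / (1 + t ^ 2 * r ^ (-(2 * α))))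
        * Real.exp (-(2 * π * lam * Mq α τ t r R))
        * (t * r ^ (-α) * Real.cos (2 * π * lam * Nq α τ t r R)
            - Real.sin (2 * π * lam * Nq α τ t r R))) * key
  calc
    (∫ r in Ioi (0:ℝ), ∫ t in Ioi (0:ℝ),
        2 * π * (c * lam) * r * Real.exp (-(π * (c * lam) * r ^ 2)) * (1 / t)
          * (1 / (1 + t ^ 2 * r ^ (-(2 * α))))
          * Real.exp (-(2 * π * (c * lam) * Mq α τ t r (s * R)))
          * (t * r ^ (-α) * Real.cos (2 * π * (c * lam) * Nq α τ t r (s * R))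
              - Real.sin (2 * π * (c * lam) * Nq α τ t r (s * R))))
      = s * ∫ r in Ioi (0:ℝ), ∫ t in Ioi (0:ℝ),
          2 * π * (c * lam) * (s * r) * Real.exp (-(π * (c * lam) * (s * r) ^ 2)) * (1 / t)
            * (1 / (1 + t ^ 2 * (s * r) ^ (-(2 * α))))
            * Real.exp (-(2 * π * (c * lam) * Mq α τ t (s * r) (s * R)))
            * (t * (s * r) ^ (-α) * Real.cos (2 * π * (c * lam) * Nq α τ t (s * r) (s * R))
                - Real.sin (2 * π * (c * lam) * Nq α τ t (s * r) (s * R))) := by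
        have o := scale_Ioi (fun ρ => ∫ t in Ioi (0:ℝ),
            2 * π * (c * lam) * ρ * Real.exp (-(π * (c * lam) * ρ ^ 2)) * (1 / t)
              * (1 / (1 + t ^ 2 * ρ ^ (-(2 * α))))
              * Real.exp (-(2 * π * (c * lam) * Mq α τ t ρ (s * R)))
              * (t * ρ ^ (-α) * Real.cos (2 * π * (c * lam) * Nq α τ t ρ (s * R))
                  - Real.sin (2 * π * (c * lam) * Nq α τ t ρ (s * R)))) hs 0
        rw [mul_zero] at o
        exact o
    _ = s * ∫ r in Ioi (0:ℝ), s⁻¹ * ∫ t in Ioi (0:ℝ),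
          2 * π * lam * r * Real.exp (-(π * lam * r ^ 2)) * (1 / t)
            * (1 / (1 + t ^ 2 * r ^ (-(2 * α))))
            * Real.exp (-(2 * π * lam * Mq α τ t r R))
            * (t * r ^ (-α) * Real.cos (2 * π * lam * Nq α τ t r R)
                - Real.sin (2 * π * lam * Nq α τ t r R)) := by
        congr 1
        refine setIntegral_congr_fun measurableSet_Ioi (fun r hr => ?_)
        have hr' : 0 < r := hr
        calc
          (∫ t in Ioi (0:ℝ),
              2 * π * (c * lam) * (s * r) * Real.exp (-(π * (c * lam) * (s * r) ^ 2)) * (1 / t)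
                * (1 / (1 + t ^ 2 * (s * r) ^ (-(2 * α))))
                * Real.exp (-(2 * π * (c * lam) * Mq α τ t (s * r) (s * R)))
                * (t * (s * r) ^ (-α) * Real.cos (2 * π * (c * lam) * Nq α τ t (s * r) (s * R))
                    - Real.sin (2 * π * (c * lam) * Nq α τ t (s * r) (s * R))))
            = s ^ α * ∫ t in Ioi (0:ℝ),
                2 * π * (c * lam) * (s * r)
                  * Real.exp (-(π * (c * lam) * (s * r) ^ 2)) * (1 / (s ^ α * t))
                  * (1 / (1 + (s ^ α * t) ^ 2 * (s * r) ^ (-(2 * α))))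
                  * Real.exp (-(2 * π * (c * lam) * Mq α τ (s ^ α * t) (s * r) (s * R)))
                  * (s ^ α * t * (s * r) ^ (-α)
                        * Real.cos (2 * π * (c * lam) * Nq α τ (s ^ α * t) (s * r) (s * R))
                      - Real.sin (2 * π * (c * lam) * Nq α τ (s ^ α * t) (s * r) (s * R))) := by
              have o2 := scale_Ioi (fun t => 2 * π * (c * lam) * (s * r)
                  * Real.exp (-(π * (c * lam) * (s * r) ^ 2)) * (1 / t)
                  * (1 / (1 + t ^ 2 * (s * r) ^ (-(2 * α))))
                  * Real.exp (-(2 * π * (c * lam) * Mq α τ t (s * r) (s * R)))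
                  * (t * (s * r) ^ (-α)
                        * Real.cos (2 * π * (c * lam) * Nq α τ t (s * r) (s * R))
                      - Real.sin (2 * π * (c * lam) * Nq α τ t (s * r) (s * R)))) hsa 0
              rw [mul_zero] at o2
              exact o2
          _ = s ^ α * ∫ t in Ioi (0:ℝ), (s ^ α)⁻¹ * (s⁻¹ *
                (2 * π * lam * r * Real.exp (-(π * lam * r ^ 2)) * (1 / t)
                  * (1 / (1 + t ^ 2 * r ^ (-(2 * α))))
                  * Real.exp (-(2 * π * lam * Mq α τ t r R))
                  * (t * r ^ (-α) * Real.cos (2 * π * lam * Nq α τ t r R)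
                      - Real.sin (2 * π * lam * Nq α τ t r R)))) := by
              congr 1
              exact setIntegral_congr_fun measurableSet_Ioi (fun t ht => point r hr' t ht)
          _ = s⁻¹ * ∫ t in Ioi (0:ℝ),
                2 * π * lam * r * Real.exp (-(π * lam * r ^ 2)) * (1 / t)
                  * (1 / (1 + t ^ 2 * r ^ (-(2 * α))))
                  * Real.exp (-(2 * π * lam * Mq α τ t r R))
                  * (t * r ^ (-α) * Real.cos (2 * π * lam * Nq α τ t r R)
                      - Real.sin (2 * π * lam * Nq α τ t r R)) := by
              rw [integral_const_mul, integral_const_mul, ← mul_assoc, mul_inv_cancel₀ hsa.ne', one_mul]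
    _ = ∫ r in Ioi (0:ℝ), ∫ t in Ioi (0:ℝ),
          2 * π * lam * r * Real.exp (-(π * lam * r ^ 2)) * (1 / t)
            * (1 / (1 + t ^ 2 * r ^ (-(2 * α))))
            * Real.exp (-(2 * π * lam * Mq α τ t r R))
            * (t * r ^ (-α) * Real.cos (2 * π * lam * Nq α τ t r R)
                - Real.sin (2 * π * lam * Nq α τ t r R)) := by
        rw [integral_const_mul, ← mul_assoc, mul_inv_cancel₀ hs.ne', one_mul]
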